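/- Let H ∈ (1/2,1), T>0 and n ∈ ℕ. There exists a constant C>0, depending only on H (and T), such that for every f ∈ L²([0,T];ℝⁿ), ∫_0^T | C_H t^{H−1/2} ∫_0^t (t−s)^{H−3/2} s^{1/2−H} f(s) ds |² dt ≤ C ∫_0^T |f(s)|² ds; that is, the operator K̇_H is bounded on L²([0,T];ℝⁿ). -/

import Mathlib

/-!
The kernel `k(t,s) = C_H t^{H-1/2} (t-s)^{H-3/2} s^{1/2-H}` (for `0 < s < t`) of `K̇_H` is
nonnegative, so `|K̇_H f| ≤ K|f|` for the positive integral operator `K` with kernel `k`, and it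
suffices to bound `K` on `L²(0,T)`. This follows from Schur's test with the weight
`w(x) = x^{-1/2}`: splitting `∫_0^t` at `t/2` gives `∫_0^t k(t,s) s^{-1/2} ds ≲ T^{H-1/2} t^{-1/2}`,
and since `t^{H-1/2} t^{-1/2} = t^{H-1} ≤ s^{H-1}` for `t ≥ s`, also
`∫_s^T k(t,s) t^{-1/2} dt ≲ T^{H-1/2} s^{-1/2}`.
-/

open MeasureTheory Set

/-- The Beta function, `B(a,b) = Γ(a)Γ(b)/Γ(a+b)`. -/
noncomputable def realBeta (a b : ℝ) : ℝ :=
  Real.Gamma a * Real.Gamma b / Real.Gamma (a + b)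

/-- The normalizing constant `C_H = √(H(2H−1)/B(2−2H, H−1/2))`. -/
noncomputable def CH (H : ℝ) : ℝ :=
  Real.sqrt (H * (2 * H - 1) / realBeta (2 - 2 * H) (H - 1 / 2))

/-- The operator `K̇_H`:
`(K̇_H f)(t) = C_H t^{H−1/2} ∫_0^t (t−s)^{H−3/2} s^{1/2−H} f(s) ds`. -/
noncomputable def dotKH {n : ℕ} (H : ℝ) (f : ℝ → EuclideanSpace ℝ (Fin n)) (t : ℝ) :
    EuclideanSpace ℝ (Fin n) :=
  (CH H * t ^ (H - 1 / 2)) • ∫ s in (0:ℝ)..t, ((t - s) ^ (H - 3 / 2) * s ^ ((1:ℝ) / 2 - H)) • f s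

open scoped ENNReal

section SchurTest

variable {α β : Type*} [MeasurableSpace α] [MeasurableSpace β] {μ : Measure α} {ν : Measure β}

theorem sq_lintegral_mul_le_lintegral_mul_mul_lintegral_mul_div {k g q : α → ℝ≥0∞}
    (hk : AEMeasurable k μ) (hg : AEMeasurable g μ) (hq : AEMeasurable q μ)
    (hq0 : ∀ᵐ x ∂μ, q x ≠ 0) (hqtop : ∀ᵐ x ∂μ, q x ≠ ∞) :
    (∫⁻ x, k x * g x ∂μ) ^ 2 ≤ (∫⁻ x, k x * q x ∂μ) * ∫⁻ x, k x * g x ^ 2 / q x ∂μ := by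
  set u : α → ℝ≥0∞ := fun x => (k x * q x) ^ (2⁻¹ : ℝ)
  set v : α → ℝ≥0∞ := fun x => (k x * g x ^ 2 / q x) ^ (2⁻¹ : ℝ)
  have huv : (fun x => k x * g x) =ᵐ[μ] u * v := by
    filter_upwards [hq0, hqtop] with x h0 htop
    have hsq : k x * q x * (k x * g x ^ 2 / q x) = (k x * g x) ^ (2 : ℝ) := by
      calc k x * q x * (k x * g x ^ 2 / q x) = k x * (q x * (k x * g x ^ 2 / q x)) := by ring
        _ = (k x * g x) ^ (2 : ℝ) := by
          rw [ENNReal.mul_div_cancel h0 htop, ENNReal.rpow_two]; ring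
    simp only [Pi.mul_apply, u, v]
    rw [← ENNReal.mul_rpow_of_nonneg _ _ (by norm_num), hsq, ENNReal.rpow_rpow_inv two_ne_zero]
  have hu : AEMeasurable u μ := (hk.mul hq).pow_const _
  have hv : AEMeasurable v μ := ((hk.mul (hg.pow_const 2)).div hq).pow_const _
  have holder := ENNReal.lintegral_mul_le_Lp_mul_Lq μ .two_two hu hv
  simp only [u, v, ENNReal.rpow_inv_rpow two_ne_zero] at holder
  rw [lintegral_congr_ae huv]
  calc (∫⁻ x, (u * v) x ∂μ) ^ 2
      ≤ ((∫⁻ x, k x * q x ∂μ) ^ (1 / 2 : ℝ) * (∫⁻ x, k x * g x ^ 2 / q x ∂μ) ^ (1 / 2 : ℝ)) ^ 2 :=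
        pow_le_pow_left₀ zero_le holder 2
    _ = (∫⁻ x, k x * q x ∂μ) * ∫⁻ x, k x * g x ^ 2 / q x ∂μ := by
        rw [mul_pow, ← ENNReal.rpow_natCast, ← ENNReal.rpow_natCast (_ ^ _), ← ENNReal.rpow_mul,
          ← ENNReal.rpow_mul]
        norm_num

theorem lintegral_sq_lintegral_le_of_schur_test [SFinite μ] [SFinite ν] {K : α → β → ℝ≥0∞}
    (hK : Measurable (Function.uncurry K)) {p : α → ℝ≥0∞} {q : β → ℝ≥0∞}
    (hp : Measurable p) (hq : Measurable q) (hq0 : ∀ᵐ s ∂ν, q s ≠ 0) (hqtop : ∀ᵐ s ∂ν, q s ≠ ∞)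
    {A B : ℝ≥0∞} (hrow : ∀ᵐ t ∂μ, ∫⁻ s, K t s * q s ∂ν ≤ A * p t)
    (hcol : ∀ᵐ s ∂ν, ∫⁻ t, K t s * p t ∂μ ≤ B * q s) {g : β → ℝ≥0∞} (hg : AEMeasurable g ν) :
    ∫⁻ t, (∫⁻ s, K t s * g s ∂ν) ^ 2 ∂μ ≤ A * B * ∫⁻ s, g s ^ 2 ∂ν := by
  wlog hgm : Measurable g generalizing g
  · have hcongr : ∀ t, ∫⁻ s, K t s * g s ∂ν = ∫⁻ s, K t s * hg.mk g s ∂ν := fun t =>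
      lintegral_congr_ae (hg.ae_eq_mk.mono fun s hs => by simp only [hs])
    have hsq : ∫⁻ s, g s ^ 2 ∂ν = ∫⁻ s, hg.mk g s ^ 2 ∂ν :=
      lintegral_congr_ae (hg.ae_eq_mk.mono fun s hs => by simp only [hs])
    simp_rw [hcongr, hsq]
    exact this hg.measurable_mk.aemeasurable hg.measurable_mk
  have hK' : Measurable fun z : α × β => K z.1 z.2 := hK
  have hF : Measurable fun z : α × β => p z.1 * (K z.1 z.2 * (g z.2 ^ 2 / q z.2)) := by
    fun_prop
  calc ∫⁻ t, (∫⁻ s, K t s * g s ∂ν) ^ 2 ∂μ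
      ≤ ∫⁻ t, A * (p t * ∫⁻ s, K t s * (g s ^ 2 / q s) ∂ν) ∂μ := by
        refine lintegral_mono_ae ?_
        filter_upwards [hrow] with t ht
        refine (sq_lintegral_mul_le_lintegral_mul_mul_lintegral_mul_div
          (hK'.comp measurable_prodMk_left).aemeasurable hgm.aemeasurable hq.aemeasurable
          hq0 hqtop).trans ?_
        simp_rw [← mul_div_assoc, ← mul_assoc]
        exact mul_le_mul_left ht _
    _ = A * ∫⁻ t, ∫⁻ s, p t * (K t s * (g s ^ 2 / q s)) ∂ν ∂μ := by
        rw [← lintegral_const_mul _ hF.lintegral_prod_right']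
        refine lintegral_congr fun t => congrArg _ ?_
        exact (lintegral_const_mul _ ((hK'.comp measurable_prodMk_left).mul
          ((hgm.pow_const 2).div hq))).symm
    _ = A * ∫⁻ s, (∫⁻ t, K t s * p t ∂μ) * (g s ^ 2 / q s) ∂ν := by
        rw [lintegral_lintegral_swap hF.aemeasurable]
        refine congrArg _ (lintegral_congr fun s => ?_)
        have hKp : Measurable fun t => K t s * p t := (hK'.comp measurable_prodMk_right).mul hp
        rw [← lintegral_mul_const _ hKp]
        exact lintegral_congr fun t => by ring
    _ ≤ A * ∫⁻ s, B * g s ^ 2 ∂ν := by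
        gcongr 1
        refine lintegral_mono_ae ?_
        filter_upwards [hcol, hq0, hqtop] with s hs h0 htop
        calc (∫⁻ t, K t s * p t ∂μ) * (g s ^ 2 / q s) ≤ B * q s * (g s ^ 2 / q s) := by gcongr
          _ = B * g s ^ 2 := by rw [mul_assoc, ENNReal.mul_div_cancel h0 htop]
    _ = A * B * ∫⁻ s, g s ^ 2 ∂ν := by
        rw [lintegral_const_mul _ (hgm.pow_const 2), mul_assoc]

end SchurTest

section NormSq

variable {α E : Type*} [MeasurableSpace α] [NormedAddCommGroup E] {μ : Measure α}

theorem ofReal_integral_norm_sq_le_lintegral_enorm_sq (f : α → E) :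
    ENNReal.ofReal (∫ x, ‖f x‖ ^ 2 ∂μ) ≤ ∫⁻ x, ‖f x‖ₑ ^ 2 ∂μ := by
  refine (Real.ofReal_le_enorm _).trans ((enorm_integral_le_lintegral_enorm _).trans ?_)
  simp_rw [enorm_pow, enorm_norm, le_rfl]

theorem MeasureTheory.MemLp.lintegral_enorm_sq_eq_ofReal_integral_norm_sq {f : α → E}
    (hf : MemLp f 2 μ) :
    ∫⁻ x, ‖f x‖ₑ ^ 2 ∂μ = ENNReal.ofReal (∫ x, ‖f x‖ ^ 2 ∂μ) := by
  have h := ofReal_integral_norm_eq_lintegral_enorm (hf.integrable_norm_pow two_ne_zero)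
  simp_rw [norm_pow, norm_norm, enorm_pow, enorm_norm] at h
  exact h.symm

end NormSq

theorem lintegral_Ioc_ofReal_eq_intervalIntegral {f : ℝ → ℝ} {a b : ℝ} (hab : a ≤ b)
    (hf : IntervalIntegrable f volume a b) (hf0 : ∀ x ∈ Ioc a b, 0 ≤ f x) :
    ∫⁻ x in Ioc a b, ENNReal.ofReal (f x) = ENNReal.ofReal (∫ x in a..b, f x) := by
  rw [intervalIntegral.integral_of_le hab, ofReal_integral_eq_lintegral_ofReal
    ((intervalIntegrable_iff_integrableOn_Ioc_of_le hab).1 hf)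
    (ae_restrict_of_forall_mem measurableSet_Ioc hf0)]

theorem lintegral_Ioc_rpow_sub {r a b : ℝ} (hr : -1 < r) (hab : a ≤ b) :
    ∫⁻ s in Ioc a b, ENNReal.ofReal ((s - a) ^ r)
      = ENNReal.ofReal ((b - a) ^ (r + 1) / (r + 1)) := by
  have hint : IntervalIntegrable (fun s => (s - a) ^ r) volume a b := by
    simpa using
      (intervalIntegral.intervalIntegrable_rpow' hr (a := 0) (b := b - a)).comp_sub_right a
  rw [lintegral_Ioc_ofReal_eq_intervalIntegral hab hint
    fun s hs => Real.rpow_nonneg (sub_nonneg.2 hs.1.le) r,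
    intervalIntegral.integral_comp_sub_right (fun s => s ^ r), sub_self,
    integral_rpow (Or.inl hr), Real.zero_rpow (by linarith), sub_zero]

theorem lintegral_Ioc_sub_rpow {r a b : ℝ} (hr : -1 < r) (hab : a ≤ b) :
    ∫⁻ s in Ioc a b, ENNReal.ofReal ((b - s) ^ r)
      = ENNReal.ofReal ((b - a) ^ (r + 1) / (r + 1)) := by
  have hint : IntervalIntegrable (fun s => (b - s) ^ r) volume a b := by
    simpa using
      ((intervalIntegral.intervalIntegrable_rpow' hr (a := 0) (b := b - a)).comp_sub_left b).symm
  rw [lintegral_Ioc_ofReal_eq_intervalIntegral hab hint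
    fun s hs => Real.rpow_nonneg (sub_nonneg.2 hs.2) r,
    intervalIntegral.integral_comp_sub_left (fun s => s ^ r), sub_self,
    integral_rpow (Or.inl hr), Real.zero_rpow (by linarith), sub_zero]

/-- A crude substitute for `t^{a+b+1} B(a+1, b+1)`, from splitting `(0, t]` at `t / 2`. -/
theorem lintegral_Ioc_sub_rpow_mul_rpow_le {a b t : ℝ} (ha : -1 < a) (ha0 : a ≤ 0)
    (hb : -1 < b) (hb0 : b ≤ 0) (ht : 0 < t) :
    ∫⁻ s in Ioc 0 t, ENNReal.ofReal ((t - s) ^ a * s ^ b)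
      ≤ ENNReal.ofReal ((1 / (a + 1) + 1 / (b + 1)) * (t / 2) ^ (a + b + 1)) := by
  have ht2 : 0 < t / 2 := half_pos ht
  have hfirst : ∫⁻ s in Ioc 0 (t / 2), ENNReal.ofReal ((t - s) ^ a * s ^ b)
      ≤ ENNReal.ofReal ((t / 2) ^ a) * ENNReal.ofReal ((t / 2) ^ (b + 1) / (b + 1)) := by
    have hint := lintegral_Ioc_rpow_sub hb ht2.le
    simp only [sub_zero] at hint
    rw [← hint, ← lintegral_const_mul' _ _ ENNReal.ofReal_ne_top]
    refine setLIntegral_mono' measurableSet_Ioc fun s hs => ?_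
    rw [← ENNReal.ofReal_mul (by positivity)]
    have hts : t / 2 ≤ t - s := by linarith [hs.2]
    exact ENNReal.ofReal_le_ofReal (mul_le_mul_of_nonneg_right
      (Real.rpow_le_rpow_of_nonpos ht2 hts ha0) (Real.rpow_nonneg hs.1.le b))
  have hsecond : ∫⁻ s in Ioc (t / 2) t, ENNReal.ofReal ((t - s) ^ a * s ^ b)
      ≤ ENNReal.ofReal ((t / 2) ^ b) * ENNReal.ofReal ((t / 2) ^ (a + 1) / (a + 1)) := by
    have hint := lintegral_Ioc_sub_rpow ha (half_le_self ht.le)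
    rw [sub_half] at hint
    rw [← hint, ← lintegral_const_mul' _ _ ENNReal.ofReal_ne_top]
    refine setLIntegral_mono' measurableSet_Ioc fun s hs => ?_
    rw [← ENNReal.ofReal_mul (by positivity), mul_comm]
    exact ENNReal.ofReal_le_ofReal (mul_le_mul_of_nonneg_right
      (Real.rpow_le_rpow_of_nonpos ht2 hs.1.le hb0) (Real.rpow_nonneg (by linarith [hs.2]) a))
  have hpow_a : (t / 2) ^ a * (t / 2) ^ (b + 1) = (t / 2) ^ (a + b + 1) := by
    rw [← Real.rpow_add ht2]; ring_nf
  have hpow_b : (t / 2) ^ b * (t / 2) ^ (a + 1) = (t / 2) ^ (a + b + 1) := by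
    rw [← Real.rpow_add ht2]; ring_nf
  have ha1 : 0 < a + 1 := by linarith
  have hb1 : 0 < b + 1 := by linarith
  rw [← Ioc_union_Ioc_eq_Ioc ht2.le (half_le_self ht.le),
    lintegral_union measurableSet_Ioc (Ioc_disjoint_Ioc_of_le le_rfl)]
  calc _ ≤ _ := add_le_add hfirst hsecond
    _ = _ := by
      rw [← ENNReal.ofReal_mul (by positivity), ← ENNReal.ofReal_mul (by positivity),
        ← ENNReal.ofReal_add (by positivity) (by positivity)]
      congr 1
      calc (t / 2) ^ a * ((t / 2) ^ (b + 1) / (b + 1)) + (t / 2) ^ b * ((t / 2) ^ (a + 1) / (a + 1))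
          = (t / 2) ^ a * (t / 2) ^ (b + 1) / (b + 1)
            + (t / 2) ^ b * (t / 2) ^ (a + 1) / (a + 1) := by ring
        _ = _ := by rw [hpow_a, hpow_b]; ring

theorem CH_pos {H : ℝ} (hH : 1 / 2 < H) (hH1 : H < 1) : 0 < CH H := by
  have hB : 0 < realBeta (2 - 2 * H) (H - 1 / 2) :=
    div_pos (mul_pos (Real.Gamma_pos_of_pos (by linarith)) (Real.Gamma_pos_of_pos (by linarith)))
      (Real.Gamma_pos_of_pos (by linarith))
  exact Real.sqrt_pos.2 (div_pos (mul_pos (by linarith) (by linarith)) hB)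

noncomputable def dotKHKernel (H t s : ℝ) : ℝ :=
  CH H * t ^ (H - 1 / 2) * ((t - s) ^ (H - 3 / 2) * s ^ (1 / 2 - H))

noncomputable def dotKHKernelENNReal (H t s : ℝ) : ℝ≥0∞ :=
  (Ioo 0 t).indicator (fun s => ENNReal.ofReal (dotKHKernel H t s)) s

theorem measurable_dotKHKernelENNReal (H : ℝ) :
    Measurable (Function.uncurry (dotKHKernelENNReal H)) := by
  have hset : MeasurableSet {z : ℝ × ℝ | z.2 ∈ Ioo 0 z.1} :=
    (measurableSet_lt measurable_const measurable_snd).inter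
      (measurableSet_lt measurable_snd measurable_fst)
  exact Measurable.ite hset (by unfold dotKHKernel; fun_prop) measurable_const

theorem setLIntegral_dotKHKernelENNReal_row {H t T : ℝ} (htT : t ≤ T) (g : ℝ → ℝ≥0∞) :
    ∫⁻ s in Ioc 0 T, dotKHKernelENNReal H t s * g s
      = ∫⁻ s in Ioc 0 t, ENNReal.ofReal (dotKHKernel H t s) * g s := by
  simp_rw [dotKHKernelENNReal, ← indicator_mul_left]
  rw [setLIntegral_indicator measurableSet_Ioo,
    inter_eq_left.2 (Ioo_subset_Ioc_self.trans (Ioc_subset_Ioc_right htT)),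
    restrict_Ioo_eq_restrict_Ioc]

theorem setLIntegral_dotKHKernelENNReal_col {H s T : ℝ} (hs : 0 < s) (p : ℝ → ℝ≥0∞) :
    ∫⁻ t in Ioc 0 T, dotKHKernelENNReal H t s * p t
      = ∫⁻ t in Ioc s T, ENNReal.ofReal (dotKHKernel H t s) * p t := by
  have hind : ∀ t, dotKHKernelENNReal H t s * p t
      = (Ioi s).indicator (fun t => ENNReal.ofReal (dotKHKernel H t s) * p t) t := by
    intro t
    by_cases hst : s < t <;> simp [dotKHKernelENNReal, indicator, hs, hst]
  simp_rw [hind]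
  rw [setLIntegral_indicator measurableSet_Ioi, inter_comm, Ioc_inter_Ioi, sup_of_le_right hs.le]

theorem setLIntegral_dotKHKernelENNReal_row_le {H T t : ℝ} (hH : 1 / 2 < H) (hH1 : H < 1)
    (ht : t ∈ Ioc 0 T) :
    ∫⁻ s in Ioc 0 T, dotKHKernelENNReal H t s * ENNReal.ofReal (s ^ (-(1 / 2) : ℝ))
      ≤ ENNReal.ofReal (CH H * T ^ (H - 1 / 2) * 2 ^ (1 / 2 : ℝ) * (1 / (H - 1 / 2) + 1 / (1 - H)))
        * ENNReal.ofReal (t ^ (-(1 / 2) : ℝ)) := by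
  obtain ⟨ht0, htT⟩ := ht
  have hT : 0 < T := ht0.trans_le htT
  have hCH := (CH_pos hH hH1).le
  have hH2 : 0 < H - 1 / 2 := by linarith
  have hH3 : 0 < 1 - H := by linarith
  have hc : 0 ≤ CH H * t ^ (H - 1 / 2) := by positivity
  have hhalf : (t / 2) ^ (-(1 / 2) : ℝ) = 2 ^ (1 / 2 : ℝ) * t ^ (-(1 / 2) : ℝ) := by
    rw [Real.div_rpow ht0.le zero_le_two, Real.rpow_neg zero_le_two, div_inv_eq_mul, mul_comm]
  have htT' : t ^ (H - 1 / 2) ≤ T ^ (H - 1 / 2) := Real.rpow_le_rpow ht0.le htT hH2.le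
  rw [setLIntegral_dotKHKernelENNReal_row htT]
  calc _ = ∫⁻ s in Ioc 0 t, ENNReal.ofReal (CH H * t ^ (H - 1 / 2))
          * ENNReal.ofReal ((t - s) ^ (H - 3 / 2) * s ^ (-H)) := by
        refine setLIntegral_congr_fun measurableSet_Ioc fun s ⟨hs0, hst⟩ => ?_
        have hts : 0 ≤ t - s := sub_nonneg.2 hst
        have hs_exp : s ^ (1 / 2 - H) * s ^ (-(1 / 2) : ℝ) = s ^ (-H) := by
          rw [← Real.rpow_add hs0]; ring_nf
        rw [dotKHKernel, ← ENNReal.ofReal_mul (by positivity), ← ENNReal.ofReal_mul hc, ← hs_exp]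
        ring_nf
    _ = ENNReal.ofReal (CH H * t ^ (H - 1 / 2))
          * ∫⁻ s in Ioc 0 t, ENNReal.ofReal ((t - s) ^ (H - 3 / 2) * s ^ (-H)) :=
        lintegral_const_mul' _ _ ENNReal.ofReal_ne_top
    _ ≤ ENNReal.ofReal (CH H * t ^ (H - 1 / 2))
          * ENNReal.ofReal ((1 / (H - 3 / 2 + 1) + 1 / (-H + 1))
            * (t / 2) ^ (H - 3 / 2 + -H + 1)) := by
        gcongr
        exact lintegral_Ioc_sub_rpow_mul_rpow_le (by linarith) (by linarith) (by linarith)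
          (by linarith) ht0
    _ ≤ _ := by
        rw [show H - 3 / 2 + -H + 1 = -(1 / 2) by ring, hhalf,
          show H - 3 / 2 + 1 = H - 1 / 2 by ring, show -H + 1 = 1 - H by ring,
          ← ENNReal.ofReal_mul hc, ← ENNReal.ofReal_mul (by positivity)]
        refine ENNReal.ofReal_le_ofReal ?_
        calc CH H * t ^ (H - 1 / 2) * ((1 / (H - 1 / 2) + 1 / (1 - H))
              * (2 ^ (1 / 2 : ℝ) * t ^ (-(1 / 2) : ℝ)))
            = CH H * t ^ (H - 1 / 2) * 2 ^ (1 / 2 : ℝ) * (1 / (H - 1 / 2) + 1 / (1 - H))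
              * t ^ (-(1 / 2) : ℝ) := by ring
          _ ≤ _ := by gcongr

theorem setLIntegral_dotKHKernelENNReal_col_le {H T s : ℝ} (hH : 1 / 2 < H) (hH1 : H < 1)
    (hs : s ∈ Ioc 0 T) :
    ∫⁻ t in Ioc 0 T, dotKHKernelENNReal H t s * ENNReal.ofReal (t ^ (-(1 / 2) : ℝ))
      ≤ ENNReal.ofReal (CH H * T ^ (H - 1 / 2) / (H - 1 / 2))
        * ENNReal.ofReal (s ^ (-(1 / 2) : ℝ)) := by
  obtain ⟨hs0, hsT⟩ := hs
  have hT : 0 < T := hs0.trans_le hsT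
  have hCH := (CH_pos hH hH1).le
  have hH2 : 0 < H - 1 / 2 := by linarith
  have hs_exp : s ^ (1 / 2 - H) * s ^ (H - 1) = s ^ (-(1 / 2) : ℝ) := by
    rw [← Real.rpow_add hs0]; ring_nf
  rw [setLIntegral_dotKHKernelENNReal_col hs0]
  calc _ ≤ ∫⁻ t in Ioc s T, ENNReal.ofReal (CH H * s ^ (-(1 / 2) : ℝ))
          * ENNReal.ofReal ((t - s) ^ (H - 3 / 2)) := by
        refine setLIntegral_mono' measurableSet_Ioc fun t ⟨hst, _⟩ => ?_
        have ht0 : 0 < t := hs0.trans hst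
        have hts : 0 ≤ t - s := sub_nonneg.2 hst.le
        have ht_exp : t ^ (H - 1 / 2) * t ^ (-(1 / 2) : ℝ) = t ^ (H - 1) := by
          rw [← Real.rpow_add ht0]; ring_nf
        have hdecr : t ^ (H - 1) ≤ s ^ (H - 1) :=
          Real.rpow_le_rpow_of_nonpos hs0 hst.le (by linarith)
        rw [dotKHKernel, ← ENNReal.ofReal_mul (by positivity), ← ENNReal.ofReal_mul (by positivity)]
        refine ENNReal.ofReal_le_ofReal ?_
        calc CH H * t ^ (H - 1 / 2) * ((t - s) ^ (H - 3 / 2) * s ^ (1 / 2 - H)) * t ^ (-(1 / 2) : ℝ)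
            = CH H * (t ^ (H - 1 / 2) * t ^ (-(1 / 2) : ℝ)) * s ^ (1 / 2 - H)
              * (t - s) ^ (H - 3 / 2) := by ring
          _ ≤ CH H * s ^ (H - 1) * s ^ (1 / 2 - H) * (t - s) ^ (H - 3 / 2) := by
              rw [ht_exp]; gcongr
          _ = CH H * s ^ (-(1 / 2) : ℝ) * (t - s) ^ (H - 3 / 2) := by rw [← hs_exp]; ring
    _ = ENNReal.ofReal (CH H * s ^ (-(1 / 2) : ℝ))
          * ENNReal.ofReal ((T - s) ^ (H - 3 / 2 + 1) / (H - 3 / 2 + 1)) := by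
        rw [lintegral_const_mul' _ _ ENNReal.ofReal_ne_top,
          lintegral_Ioc_rpow_sub (by linarith) hsT]
    _ ≤ _ := by
        have hTs : (T - s) ^ (H - 1 / 2) ≤ T ^ (H - 1 / 2) :=
          Real.rpow_le_rpow (by linarith) (by linarith) hH2.le
        rw [← ENNReal.ofReal_mul (by positivity), ← ENNReal.ofReal_mul (by positivity),
          show H - 3 / 2 + 1 = H - 1 / 2 by ring]
        refine ENNReal.ofReal_le_ofReal ?_
        calc CH H * s ^ (-(1 / 2) : ℝ) * ((T - s) ^ (H - 1 / 2) / (H - 1 / 2))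
            = CH H * (T - s) ^ (H - 1 / 2) / (H - 1 / 2) * s ^ (-(1 / 2) : ℝ) := by ring
          _ ≤ _ := by gcongr

theorem lintegral_sq_lintegral_dotKHKernelENNReal_le {H T : ℝ} (hH : 1 / 2 < H) (hH1 : H < 1)
    {g : ℝ → ℝ≥0∞} (hg : AEMeasurable g (volume.restrict (Ioc 0 T))) :
    ∫⁻ t in Ioc 0 T, (∫⁻ s in Ioc 0 T, dotKHKernelENNReal H t s * g s) ^ 2
      ≤ ENNReal.ofReal (CH H * T ^ (H - 1 / 2) * 2 ^ (1 / 2 : ℝ) * (1 / (H - 1 / 2) + 1 / (1 - H)))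
        * ENNReal.ofReal (CH H * T ^ (H - 1 / 2) / (H - 1 / 2)) * ∫⁻ s in Ioc 0 T, g s ^ 2 := by
  have hw : Measurable fun x : ℝ => ENNReal.ofReal (x ^ (-(1 / 2) : ℝ)) := by fun_prop
  have hw0 : ∀ᵐ x ∂volume.restrict (Ioc 0 T), ENNReal.ofReal (x ^ (-(1 / 2) : ℝ)) ≠ 0 :=
    ae_restrict_of_forall_mem measurableSet_Ioc fun x hx =>
      ENNReal.ofReal_ne_zero_iff.2 (Real.rpow_pos_of_pos hx.1 _)
  exact lintegral_sq_lintegral_le_of_schur_test (measurable_dotKHKernelENNReal H) hw hw hw0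
    (ae_of_all _ fun _ => ENNReal.ofReal_ne_top)
    (ae_restrict_of_forall_mem measurableSet_Ioc fun t ht =>
      setLIntegral_dotKHKernelENNReal_row_le hH hH1 ht)
    (ae_restrict_of_forall_mem measurableSet_Ioc fun s hs =>
      setLIntegral_dotKHKernelENNReal_col_le hH hH1 hs)
    hg

theorem enorm_dotKH_le {n : ℕ} {H T t : ℝ} (ht : t ∈ Ioc 0 T)
    (f : ℝ → EuclideanSpace ℝ (Fin n)) :
    ‖dotKH H f t‖ₑ ≤ ∫⁻ s in Ioc 0 T, dotKHKernelENNReal H t s * ‖f s‖ₑ := by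
  obtain ⟨ht0, htT⟩ := ht
  have hCH : 0 ≤ CH H := Real.sqrt_nonneg _
  rw [setLIntegral_dotKHKernelENNReal_row htT, dotKH, enorm_smul,
    intervalIntegral.integral_of_le ht0.le]
  calc _ ≤ ‖CH H * t ^ (H - 1 / 2)‖ₑ
          * ∫⁻ s in Ioc 0 t, ‖((t - s) ^ (H - 3 / 2) * s ^ ((1:ℝ) / 2 - H)) • f s‖ₑ := by
        gcongr
        exact enorm_integral_le_lintegral_enorm _
    _ = _ := by
        rw [← lintegral_const_mul' _ _ enorm_ne_top]
        refine setLIntegral_congr_fun measurableSet_Ioc fun s ⟨hs0, hst⟩ => ?_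
        have hts : 0 ≤ t - s := sub_nonneg.2 hst
        rw [enorm_smul, ← mul_assoc, ← enorm_mul, Real.enorm_eq_ofReal (by positivity), dotKHKernel]

/-- The operator `K̇_H` is bounded on `L²([0,T];ℝⁿ)`: there is a constant `C > 0`,
depending only on `H` (and `T`), with
`∫_0^T |(K̇_H f)(t)|² dt ≤ C ∫_0^T |f(s)|² ds` for every `f ∈ L²([0,T];ℝⁿ)`. -/
theorem dotKH_bounded_L2
    (H T : ℝ) (n : ℕ) (hH : 1 / 2 < H) (hH1 : H < 1) (hT : 0 < T) :
    ∃ C : ℝ, 0 < C ∧ ∀ f : ℝ → EuclideanSpace ℝ (Fin n),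
      MemLp f 2 (volume.restrict (Ioc (0:ℝ) T)) →
      ∫ t in Ioc (0:ℝ) T, ‖dotKH H f t‖ ^ 2 ≤ C * ∫ s in Ioc (0:ℝ) T, ‖f s‖ ^ 2 := by
  have hCH := CH_pos hH hH1
  have hH2 : 0 < H - 1 / 2 := by linarith
  have hH3 : 0 < 1 - H := by linarith
  set A := CH H * T ^ (H - 1 / 2) * 2 ^ (1 / 2 : ℝ) * (1 / (H - 1 / 2) + 1 / (1 - H))
  set B := CH H * T ^ (H - 1 / 2) / (H - 1 / 2)
  refine ⟨A * B, by positivity, fun f hf => (ENNReal.ofReal_le_ofReal_iff (by positivity)).1 ?_⟩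
  calc ENNReal.ofReal (∫ t in Ioc 0 T, ‖dotKH H f t‖ ^ 2)
      ≤ ∫⁻ t in Ioc 0 T, ‖dotKH H f t‖ₑ ^ 2 := ofReal_integral_norm_sq_le_lintegral_enorm_sq _
    _ ≤ ∫⁻ t in Ioc 0 T, (∫⁻ s in Ioc 0 T, dotKHKernelENNReal H t s * ‖f s‖ₑ) ^ 2 :=
        setLIntegral_mono' measurableSet_Ioc fun t ht =>
          pow_le_pow_left₀ zero_le (enorm_dotKH_le ht f) 2
    _ ≤ ENNReal.ofReal A * ENNReal.ofReal B * ∫⁻ s in Ioc 0 T, ‖f s‖ₑ ^ 2 :=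
        lintegral_sq_lintegral_dotKHKernelENNReal_le hH hH1 hf.1.aemeasurable.enorm
    _ = ENNReal.ofReal (A * B * ∫ s in Ioc 0 T, ‖f s‖ ^ 2) := by
        rw [hf.lintegral_enorm_sq_eq_ofReal_integral_norm_sq, ← ENNReal.ofReal_mul (by positivity),
          ← ENNReal.ofReal_mul (by positivity)]
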